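/- Let u: [0,Λ)^d → [0,1]^P be measurable with Σᵢuᵢ = 1 a.e., σ a symmetric matrix of surface tensions satisfying the triangle inequality, and define E_h(u) := h^{−1/2} ∫ u·σ(G_h∗u) dx. Then for every h>0 and every N∈ℕ one has the monotonicity E_{N²h}(u) ≤ E_h(u). -/

import Mathlib

open Real MeasureTheory Finset

/-- The centered Gaussian kernel of variance `h` on `ℝ^d`. -/
noncomputable def gauss (d : ℕ) (h : ℝ) (z : EuclideanSpace ℝ (Fin d)) : ℝ :=
  (2 * π * h) ^ (-(d : ℝ) / 2) * Real.exp (-‖z‖ ^ 2 / (2 * h))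

/-- The fundamental cell `[0,Λ)^d` of the flat torus, as a subset of `ℝ^d`. -/
def box (d : ℕ) (Λ : ℝ) : Set (EuclideanSpace ℝ (Fin d)) :=
  {x | ∀ i, x i ∈ Set.Ico (0:ℝ) Λ}

/-- The thresholding energy
`E_h(u) = h^{-1/2} ∑_{i,j} σ_{ij} ∫_{[0,Λ)^d} u_i (G_h∗u_j) dx`. -/
noncomputable def Eh (d P : ℕ) (Λ : ℝ) (σ : Matrix (Fin P) (Fin P) ℝ) (h : ℝ)
    (u : EuclideanSpace ℝ (Fin d) → Fin P → ℝ) : ℝ :=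
  h ^ (-(1:ℝ) / 2) * ∑ i, ∑ j, σ i j *
    ∫ x in box d Λ, u x i * ∫ z, gauss d h z * u (x - z) j

/-!
Write `E_h(u) = h^{-1/2} ∫ G_h(w) C(w) dw` with the correlation
`C(w) = ∑ σ_ij ∫_{[0,Λ)^d} u_i u_j(· - w)`. The substitution `z = N w` turns `E_{N²h}(u)` into
`N⁻¹ h^{-1/2} ∫ G_h(w) C(N w) dw`, so it suffices that `C(N w) ≤ N C(w)`. For probability
vectors the form `(p, q) ↦ ∑ σ_ij p_i q_j` inherits the triangle inequality of `σ`; applied along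
the chain `u(x), u(x - w), …, u(x - N w)` and integrated over the torus, where by periodicity each
of the `N` links contributes `C(w)`, it gives this bound.
-/

theorem gauss_nonneg {d : ℕ} {h : ℝ} (hh : 0 ≤ h) (z : EuclideanSpace ℝ (Fin d)) :
    0 ≤ gauss d h z := by
  unfold gauss
  positivity

theorem continuous_gauss (d : ℕ) (h : ℝ) : Continuous (gauss d h) := by
  unfold gauss
  fun_prop

theorem integrable_gauss {d : ℕ} {h : ℝ} (hh : 0 < h) : Integrable (gauss d h) := by
  have hb : 0 < (1 / (2 * h) : ℂ).re := by norm_num; positivity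
  refine ((GaussianFourier.integrable_cexp_neg_mul_sq_norm_add hb 0 0).norm.const_mul
    ((2 * π * h) ^ (-(d : ℝ) / 2))).congr (ae_of_all _ fun z => ?_)
  simp only [gauss, Complex.norm_exp, zero_mul, add_zero]
  congr 2
  norm_cast
  field_simp

theorem gauss_sq_mul_smul {d : ℕ} {h c : ℝ} (hh : 0 < h) (hc : 0 < c)
    (w : EuclideanSpace ℝ (Fin d)) :
    gauss d (c ^ 2 * h) (c • w) = (c ^ d)⁻¹ * gauss d h w := by
  have hcd : (c ^ 2) ^ (-(d : ℝ) / 2) = (c ^ d)⁻¹ := by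
    rw [← rpow_natCast c 2, ← rpow_mul hc.le, ← rpow_natCast, ← rpow_neg hc.le]
    congr 1
    push_cast
    ring
  rw [gauss, gauss, norm_smul, norm_of_nonneg hc.le, mul_left_comm, mul_rpow (by positivity)
    (by positivity), hcd]
  field_simp

theorem integral_gauss_sq_mul_mul {d : ℕ} {h c : ℝ} (hh : 0 < h) (hc : 0 < c)
    (f : EuclideanSpace ℝ (Fin d) → ℝ) :
    ∫ z, gauss d (c ^ 2 * h) z * f z = ∫ w, gauss d h w * f (c • w) := by
  have hcd : c ^ d ≠ 0 := by positivity
  have := Measure.integral_comp_smul_of_nonneg volume (fun z => gauss d (c ^ 2 * h) z * f z) c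
    (hR := hc.le)
  simp only [gauss_sq_mul_smul hh hc, finrank_euclideanSpace_fin, smul_eq_mul, mul_assoc,
    integral_const_mul] at this
  rw [← mul_right_inj' (inv_ne_zero hcd), this]

theorem box_eq_preimage (d : ℕ) (Λ : ℝ) :
    box d Λ = (MeasurableEquiv.toLp 2 (Fin d → ℝ)).symm ⁻¹'
      Set.univ.pi fun _ => Set.Ico 0 Λ := by
  ext x
  simp [_root_.box]

theorem volume_box_lt_top (d : ℕ) (Λ : ℝ) : volume (box d Λ) < ⊤ := by
  rw [box_eq_preimage, (EuclideanSpace.volume_preserving_symm_measurableEquiv_toLp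
    (Fin d)).measure_preimage (MeasurableSet.univ_pi fun _ => measurableSet_Ico).nullMeasurableSet,
    volume_pi_pi]
  exact ENNReal.prod_lt_top fun _ _ => by simp

theorem integrableOn_box_of_abs_le {d : ℕ} {Λ C : ℝ} {f : EuclideanSpace ℝ (Fin d) → ℝ}
    (hf : Measurable f) (hC : ∀ x, |f x| ≤ C) : IntegrableOn f (box d Λ) :=
  Measure.integrableOn_of_bounded (volume_box_lt_top d Λ).ne hf.aestronglyMeasurable
    (ae_of_all _ hC)

theorem abs_setIntegral_box_le {d : ℕ} {Λ C : ℝ} {f : EuclideanSpace ℝ (Fin d) → ℝ}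
    (hC : ∀ x, |f x| ≤ C) : |∫ x in box d Λ, f x| ≤ C * volume.real (box d Λ) := by
  simpa only [Real.norm_eq_abs] using
    norm_setIntegral_le_of_norm_le_const (volume_box_lt_top d Λ) fun x _ =>
      (norm_eq_abs (f x)).trans_le (hC x)

noncomputable def latticeBasis (d : ℕ) {Λ : ℝ} (hΛ : 0 < Λ) :
    Module.Basis (Fin d) ℝ (EuclideanSpace ℝ (Fin d)) :=
  (PiLp.basisFun 2 ℝ (Fin d)).unitsSMul fun _ => Units.mk0 Λ hΛ.ne'

theorem latticeBasis_apply (d : ℕ) {Λ : ℝ} (hΛ : 0 < Λ) (i : Fin d) :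
    latticeBasis d hΛ i = EuclideanSpace.single i Λ := by
  ext j
  simp [latticeBasis, Module.Basis.unitsSMul_apply, Units.smul_def]

theorem fundamentalDomain_latticeBasis (d : ℕ) {Λ : ℝ} (hΛ : 0 < Λ) :
    ZSpan.fundamentalDomain (latticeBasis d hΛ) = box d Λ := by
  ext x
  simp only [ZSpan.mem_fundamentalDomain, latticeBasis, Module.Basis.repr_unitsSMul,
    PiLp.basisFun_repr, _root_.box, Set.mem_ofPred_eq, Set.mem_Ico]
  refine forall_congr' fun i => ?_
  simp [Units.smul_def, inv_mul_eq_div, div_lt_one hΛ, le_div_iff₀ hΛ]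

theorem add_left_eq_of_mem_span_latticeBasis {d : ℕ} {Λ : ℝ} (hΛ : 0 < Λ) {E : Type*}
    {F : EuclideanSpace ℝ (Fin d) → E} (hF : ∀ x i, F (x + EuclideanSpace.single i Λ) = F x)
    {v : EuclideanSpace ℝ (Fin d)} (hv : v ∈ Submodule.span ℤ (Set.range (latticeBasis d hΛ)))
    (x : EuclideanSpace ℝ (Fin d)) : F (v + x) = F x := by
  let periods : AddSubgroup (EuclideanSpace ℝ (Fin d)) :=
    { carrier := {v | ∀ x, F (v + x) = F x}
      zero_mem' := by simp
      add_mem' := fun ha hb x => by rw [add_assoc, ha, hb]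
      neg_mem' := fun ha x => by rw [← ha, add_neg_cancel_left] }
  have : (Submodule.span ℤ (Set.range (latticeBasis d hΛ))).toAddSubgroup ≤ periods := by
    rw [Submodule.span_int_eq_addSubgroupClosure, AddSubgroup.closure_le]
    rintro _ ⟨i, rfl⟩ x
    rw [latticeBasis_apply, add_comm]
    exact hF x i
  exact this hv x

theorem setIntegral_box_add_left {d : ℕ} {Λ : ℝ} (hΛ : 0 < Λ) {E : Type*} [NormedAddCommGroup E]
    [NormedSpace ℝ E] {F : EuclideanSpace ℝ (Fin d) → E}
    (hF : ∀ x i, F (x + EuclideanSpace.single i Λ) = F x) (c : EuclideanSpace ℝ (Fin d)) :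
    ∫ x in box d Λ, F (c + x) = ∫ x in box d Λ, F x := by
  have : Countable (Submodule.span ℤ (Set.range (latticeBasis d hΛ))).toAddSubgroup :=
    inferInstanceAs (Countable (Submodule.span ℤ _))
  have hfd := ZSpan.isAddFundamentalDomain' (latticeBasis d hΛ) volume
  rw [fundamentalDomain_latticeBasis] at hfd
  rw [← (measurePreserving_add_left volume c).setIntegral_image_emb
    (measurableEmbedding_addLeft c) F (box d Λ)]
  exact (hfd.vadd_of_comm c).setIntegral_eq hfd fun g x =>
    add_left_eq_of_mem_span_latticeBasis hΛ hF g.2 x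

section Triangle

variable {ι : Type*} [Fintype ι] {σ : Matrix ι ι ℝ}

theorem sum_mul_mul_le_add_of_triangle (htri : ∀ i j k, σ i j ≤ σ i k + σ k j)
    {p q r : ι → ℝ} (hp : ∀ i, 0 ≤ p i) (hq : ∀ i, 0 ≤ q i) (hr : ∀ i, 0 ≤ r i)
    (hp1 : ∑ i, p i = 1) (hq1 : ∑ i, q i = 1) (hr1 : ∑ i, r i = 1) :
    ∑ i, ∑ j, σ i j * (p i * r j) ≤
      ∑ i, ∑ k, σ i k * (p i * q k) + ∑ k, ∑ j, σ k j * (q k * r j) :=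
  calc ∑ i, ∑ j, σ i j * (p i * r j)
      = ∑ i, ∑ j, ∑ k, σ i j * (p i * q k * r j) := by
        simp only [← sum_mul, ← mul_sum, hq1, mul_one]
    _ ≤ ∑ i, ∑ j, ∑ k, (σ i k + σ k j) * (p i * q k * r j) := by
        gcongr with i _ j _ k _
        · exact mul_nonneg (mul_nonneg (hp i) (hq k)) (hr j)
        · exact htri i j k
    _ = ∑ i, ∑ k, σ i k * (p i * q k) + ∑ k, ∑ j, σ k j * (q k * r j) := by
        have hsplit : ∀ i j k, (σ i k + σ k j) * (p i * q k * r j) =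
            σ i k * (p i * q k) * r j + p i * (σ k j * (q k * r j)) := fun i j k => by ring
        simp only [hsplit, sum_add_distrib, ← mul_sum]
        rw [sum_comm (γ := ι) (f := fun i j => ∑ k, σ i k * (p i * q k) * r j)]
        conv_lhs => enter [2, 2, i]; rw [sum_comm]
        simp only [← sum_mul, ← mul_sum, hr1, hp1, mul_one, one_mul]

theorem sum_mul_mul_le_sum_range_of_triangle (htri : ∀ i j k, σ i j ≤ σ i k + σ k j)
    {v : ℕ → ι → ℝ} (hv : ∀ l i, 0 ≤ v l i) (hv1 : ∀ l, ∑ i, v l i = 1) {N : ℕ} (hN : 0 < N) :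
    ∑ i, ∑ j, σ i j * (v 0 i * v N j) ≤
      ∑ l ∈ range N, ∑ i, ∑ j, σ i j * (v l i * v (l + 1) j) := by
  induction N, hN using Nat.le_induction with
  | base => simp
  | succ n _ ih =>
    rw [sum_range_succ]
    exact (sum_mul_mul_le_add_of_triangle htri (hv 0) (hv n) (hv (n + 1)) (hv1 0) (hv1 n)
      (hv1 (n + 1))).trans (add_le_add_left ih _)

end Triangle

theorem integral_sum_sum_const_mul {α ι : Type*} [MeasurableSpace α] {μ : Measure α} [Fintype ι]
    (σ : ι → ι → ℝ) {f : ι → ι → α → ℝ} (hf : ∀ i j, Integrable (f i j) μ) :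
    ∫ x, ∑ i, ∑ j, σ i j * f i j x ∂μ = ∑ i, ∑ j, σ i j * ∫ x, f i j x ∂μ := by
  rw [integral_finsetSum _ fun i _ => integrable_finsetSum _ fun j _ => (hf i j).const_mul _]
  refine sum_congr rfl fun i _ => ?_
  rw [integral_finsetSum _ fun j _ => (hf i j).const_mul _]
  simp only [integral_const_mul]

instance isFiniteMeasure_restrict_box (d : ℕ) (Λ : ℝ) :
    IsFiniteMeasure (volume.restrict (box d Λ)) :=
  isFiniteMeasure_restrict.2 (volume_box_lt_top d Λ).ne

section Correlation

variable {d : ℕ} {Λ : ℝ} {ι : Type*} {u : EuclideanSpace ℝ (Fin d) → ι → ℝ}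

noncomputable def corrEnergy [Fintype ι] (Λ : ℝ) (σ : Matrix ι ι ℝ)
    (u : EuclideanSpace ℝ (Fin d) → ι → ℝ) (w : EuclideanSpace ℝ (Fin d)) : ℝ :=
  ∑ i, ∑ j, σ i j * ∫ x in box d Λ, u x i * u (x - w) j

theorem abs_mul_le_one_of_mem_Icc (hrange : ∀ x i, u x i ∈ Set.Icc (0 : ℝ) 1) (x y i j) :
    |u x i * u y j| ≤ 1 := by
  rw [abs_mul]
  have := hrange x i; have := hrange y j
  exact mul_le_one₀ (by grind) (abs_nonneg _) (by grind)

theorem integrableOn_box_mul_comp (hum : Measurable u) (hrange : ∀ x i, u x i ∈ Set.Icc (0 : ℝ) 1)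
    {f g : EuclideanSpace ℝ (Fin d) → EuclideanSpace ℝ (Fin d)} (hf : Measurable f)
    (hg : Measurable g) (i j : ι) :
    IntegrableOn (fun x => u (f x) i * u (g x) j) (box d Λ) :=
  integrableOn_box_of_abs_le (by fun_prop) fun x => abs_mul_le_one_of_mem_Icc hrange _ _ i j

theorem integrableOn_box_sum_mul_comp [Fintype ι] (hum : Measurable u)
    (hrange : ∀ x i, u x i ∈ Set.Icc (0 : ℝ) 1) (σ : Matrix ι ι ℝ)
    {f g : EuclideanSpace ℝ (Fin d) → EuclideanSpace ℝ (Fin d)} (hf : Measurable f)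
    (hg : Measurable g) :
    IntegrableOn (fun x => ∑ i, ∑ j, σ i j * (u (f x) i * u (g x) j)) (box d Λ) :=
  integrable_finsetSum _ fun i _ => integrable_finsetSum _ fun j _ =>
    (integrableOn_box_mul_comp hum hrange hf hg i j).const_mul _

theorem measurable_integral_box_mul_comp (hum : Measurable u) (i j : ι) :
    Measurable fun w => ∫ x in box d Λ, u x i * u (x - w) j := by
  have : StronglyMeasurable (Function.uncurry fun w x : EuclideanSpace ℝ (Fin d) =>
      u x i * u (x - w) j) := by
    apply Measurable.stronglyMeasurable
    fun_prop
  exact this.integral_prod_right.measurable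

theorem abs_integral_box_mul_comp_le (hrange : ∀ x i, u x i ∈ Set.Icc (0 : ℝ) 1) (w) (i j : ι) :
    |∫ x in box d Λ, u x i * u (x - w) j| ≤ volume.real (box d Λ) := by
  simpa using abs_setIntegral_box_le fun x => abs_mul_le_one_of_mem_Icc hrange x (x - w) i j

theorem measurable_corrEnergy [Fintype ι] (hum : Measurable u) (σ : Matrix ι ι ℝ) :
    Measurable (corrEnergy Λ σ u) := by
  unfold corrEnergy
  have := measurable_integral_box_mul_comp (Λ := Λ) hum
  fun_prop

theorem abs_corrEnergy_le [Fintype ι] (hrange : ∀ x i, u x i ∈ Set.Icc (0 : ℝ) 1)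
    (σ : Matrix ι ι ℝ) (w) :
    |corrEnergy Λ σ u w| ≤ (∑ i, ∑ j, |σ i j|) * volume.real (box d Λ) := by
  rw [corrEnergy, sum_mul]
  refine (abs_sum_le_sum_abs _ _).trans (sum_le_sum fun i _ => ?_)
  rw [sum_mul]
  refine (abs_sum_le_sum_abs _ _).trans (sum_le_sum fun j _ => ?_)
  rw [abs_mul]
  gcongr
  exact abs_integral_box_mul_comp_le hrange w i j

theorem corrEnergy_eq_setIntegral [Fintype ι] (hum : Measurable u)
    (hrange : ∀ x i, u x i ∈ Set.Icc (0 : ℝ) 1) (σ : Matrix ι ι ℝ) (w) :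
    corrEnergy Λ σ u w = ∫ x in box d Λ, ∑ i, ∑ j, σ i j * (u x i * u (x - w) j) :=
  (integral_sum_sum_const_mul σ fun i j =>
    integrableOn_box_mul_comp hum hrange measurable_id (measurable_sub_const w) i j).symm

theorem corrEnergy_natCast_smul_le [Fintype ι] (hΛ : 0 < Λ) {σ : Matrix ι ι ℝ}
    (htri : ∀ i j k, σ i j ≤ σ i k + σ k j) (hum : Measurable u)
    (hrange : ∀ x i, u x i ∈ Set.Icc (0 : ℝ) 1) (hsum : ∀ x, ∑ i, u x i = 1)
    (hper : ∀ x i, u (x + EuclideanSpace.single i Λ) = u x) (w : EuclideanSpace ℝ (Fin d))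
    {N : ℕ} (hN : 0 < N) :
    corrEnergy Λ σ u ((N : ℝ) • w) ≤ N * corrEnergy Λ σ u w := by
  set F := fun y => ∑ i, ∑ j, σ i j * (u y i * u (y - w) j)
  have hF : ∀ x i, F (x + EuclideanSpace.single i Λ) = F x := by
    simp [F, add_sub_right_comm, hper]
  have hchain : ∀ x, ∑ i, ∑ j, σ i j * (u x i * u (x - (N : ℝ) • w) j) ≤
      ∑ l ∈ range N, F (-((l : ℝ) • w) + x) := fun x => by
    have hstep : ∀ l : ℕ, x - ((l : ℝ) + 1) • w = x - (l : ℝ) • w - w := fun l => by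
      rw [add_smul, one_smul, sub_sub]
    simpa [F, hstep, neg_add_eq_sub] using sum_mul_mul_le_sum_range_of_triangle htri
      (v := fun l => u (x - (l : ℝ) • w)) (fun l i => (hrange _ i).1) (fun l => hsum _) hN
  calc corrEnergy Λ σ u ((N : ℝ) • w)
      = ∫ x in box d Λ, ∑ i, ∑ j, σ i j * (u x i * u (x - (N : ℝ) • w) j) :=
        corrEnergy_eq_setIntegral hum hrange σ _
    _ ≤ ∫ x in box d Λ, ∑ l ∈ range N, F (-((l : ℝ) • w) + x) :=
        setIntegral_mono (integrableOn_box_sum_mul_comp hum hrange σ (by fun_prop) (by fun_prop))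
          (integrable_finsetSum _ fun l _ =>
            integrableOn_box_sum_mul_comp hum hrange σ (by fun_prop) (by fun_prop))
          hchain
    _ = ∑ l ∈ range N, ∫ x in box d Λ, F (-((l : ℝ) • w) + x) :=
        integral_finsetSum _ fun l _ =>
          integrableOn_box_sum_mul_comp hum hrange σ (by fun_prop) (by fun_prop)
    _ = N * corrEnergy Λ σ u w := by
        simp [setIntegral_box_add_left hΛ hF, F, corrEnergy_eq_setIntegral hum hrange σ w]

theorem setIntegral_box_mul_conv (hum : Measurable u) (hrange : ∀ x i, u x i ∈ Set.Icc (0 : ℝ) 1)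
    {h : ℝ} (hh : 0 < h) (i j : ι) :
    ∫ x in box d Λ, u x i * ∫ z, gauss d h z * u (x - z) j =
      ∫ z, gauss d h z * ∫ x in box d Λ, u x i * u (x - z) j := by
  have hint : Integrable (Function.uncurry fun x z => u x i * (gauss d h z * u (x - z) j))
      ((volume.restrict (box d Λ)).prod volume) := by
    refine ((integrable_const (1 : ℝ)).mul_prod (integrable_gauss hh)).mono'
      (Measurable.aestronglyMeasurable (by have := continuous_gauss d h; fun_prop))
      (ae_of_all _ fun ⟨x, z⟩ => ?_)
    simp only [Function.uncurry_apply_pair, one_mul, norm_eq_abs]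
    rw [mul_left_comm, abs_mul, abs_of_nonneg (gauss_nonneg hh.le _)]
    exact mul_le_of_le_one_right (gauss_nonneg hh.le _) (abs_mul_le_one_of_mem_Icc hrange _ _ i j)
  calc ∫ x in box d Λ, u x i * ∫ z, gauss d h z * u (x - z) j
      = ∫ x in box d Λ, ∫ z, u x i * (gauss d h z * u (x - z) j) := by
        simp only [integral_const_mul]
    _ = ∫ z, ∫ x in box d Λ, u x i * (gauss d h z * u (x - z) j) := integral_integral_swap hint
    _ = ∫ z, gauss d h z * ∫ x in box d Λ, u x i * u (x - z) j := by
        simp only [← integral_const_mul, mul_left_comm]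

theorem sum_setIntegral_box_mul_conv [Fintype ι] (hum : Measurable u)
    (hrange : ∀ x i, u x i ∈ Set.Icc (0 : ℝ) 1) {h : ℝ} (hh : 0 < h) (σ : Matrix ι ι ℝ) :
    ∑ i, ∑ j, σ i j * ∫ x in box d Λ, u x i * ∫ z, gauss d h z * u (x - z) j =
      ∫ z, gauss d h z * corrEnergy Λ σ u z := by
  have hint : ∀ i j, Integrable fun z => gauss d h z * ∫ x in box d Λ, u x i * u (x - z) j :=
    fun i j => (integrable_gauss hh).mul_bdd
      (measurable_integral_box_mul_comp hum i j).aestronglyMeasurable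
      (ae_of_all _ fun z => abs_integral_box_mul_comp_le hrange z i j)
  simp only [setIntegral_box_mul_conv hum hrange hh, ← integral_sum_sum_const_mul σ hint,
    corrEnergy, mul_sum, mul_left_comm]

theorem integrable_gauss_mul_corrEnergy_comp_smul [Fintype ι] (hum : Measurable u)
    (hrange : ∀ x i, u x i ∈ Set.Icc (0 : ℝ) 1) {h : ℝ} (hh : 0 < h) (σ : Matrix ι ι ℝ) (c : ℝ) :
    Integrable fun w => gauss d h w * corrEnergy Λ σ u (c • w) :=
  (integrable_gauss hh).mul_bdd
    ((measurable_corrEnergy hum σ).comp (measurable_const_smul c)).aestronglyMeasurable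
    (ae_of_all _ fun w => abs_corrEnergy_le hrange σ (c • w))

theorem integral_gauss_mul_corrEnergy_natCast_smul_le [Fintype ι] (hΛ : 0 < Λ)
    {σ : Matrix ι ι ℝ} (htri : ∀ i j k, σ i j ≤ σ i k + σ k j) (hum : Measurable u)
    (hrange : ∀ x i, u x i ∈ Set.Icc (0 : ℝ) 1) (hsum : ∀ x, ∑ i, u x i = 1)
    (hper : ∀ x i, u (x + EuclideanSpace.single i Λ) = u x) {h : ℝ} (hh : 0 < h) {N : ℕ}
    (hN : 0 < N) :
    ∫ w, gauss d h w * corrEnergy Λ σ u ((N : ℝ) • w) ≤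
      N * ∫ w, gauss d h w * corrEnergy Λ σ u w := by
  have hint := integrable_gauss_mul_corrEnergy_comp_smul (Λ := Λ) hum hrange hh σ
  rw [← integral_const_mul]
  refine integral_mono (hint N) (by simpa using (hint 1).const_mul (N : ℝ)) fun w => ?_
  calc gauss d h w * corrEnergy Λ σ u ((N : ℝ) • w)
      ≤ gauss d h w * (N * corrEnergy Λ σ u w) := mul_le_mul_of_nonneg_left
        (corrEnergy_natCast_smul_le hΛ htri hum hrange hsum hper w hN) (gauss_nonneg hh.le w)
    _ = N * (gauss d h w * corrEnergy Λ σ u w) := mul_left_comm _ _ _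

end Correlation

section Energy

variable {d P : ℕ} {Λ : ℝ} {σ : Matrix (Fin P) (Fin P) ℝ} {u : EuclideanSpace ℝ (Fin d) → Fin P → ℝ}
  {h : ℝ}

theorem Eh_eq_integral_gauss_mul_corrEnergy (hum : Measurable u)
    (hrange : ∀ x i, u x i ∈ Set.Icc (0 : ℝ) 1) (hh : 0 < h) :
    Eh d P Λ σ h u = h ^ (-(1 : ℝ) / 2) * ∫ z, gauss d h z * corrEnergy Λ σ u z := by
  rw [Eh, sum_setIntegral_box_mul_conv hum hrange hh]

theorem Eh_sq_mul_eq (hum : Measurable u) (hrange : ∀ x i, u x i ∈ Set.Icc (0 : ℝ) 1) (hh : 0 < h)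
    {c : ℝ} (hc : 0 < c) :
    Eh d P Λ σ (c ^ 2 * h) u =
      c⁻¹ * h ^ (-(1 : ℝ) / 2) * ∫ w, gauss d h w * corrEnergy Λ σ u (c • w) := by
  have hc2 : (c ^ 2) ^ (-(1 : ℝ) / 2) = c⁻¹ := by
    rw [← rpow_natCast, ← rpow_mul hc.le, ← rpow_neg_one]
    norm_num
  rw [Eh_eq_integral_gauss_mul_corrEnergy hum hrange (by positivity), mul_rpow (by positivity)
    hh.le, hc2, integral_gauss_sq_mul_mul hh hc]

end Energy

theorem stmt10_general (d P : ℕ) (Λ : ℝ) (hΛ : 0 < Λ)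
    (σ : Matrix (Fin P) (Fin P) ℝ)
    (htri : ∀ i j k, σ i j ≤ σ i k + σ k j)
    (u : EuclideanSpace ℝ (Fin d) → Fin P → ℝ)
    (hum : Measurable u)
    (hrange : ∀ x i, u x i ∈ Set.Icc (0:ℝ) 1)
    (hsum : ∀ x, ∑ i, u x i = 1)
    (hper : ∀ (x : EuclideanSpace ℝ (Fin d)) (i : Fin d),
      u (x + EuclideanSpace.single i Λ) = u x)
    (h : ℝ) (hh : 0 < h) (N : ℕ) (hN : 0 < N) :
    Eh d P Λ σ ((N : ℝ) ^ 2 * h) u ≤ Eh d P Λ σ h u := by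
  have hN' : (0 : ℝ) < N := Nat.cast_pos.2 hN
  rw [Eh_sq_mul_eq hum hrange hh hN', Eh_eq_integral_gauss_mul_corrEnergy hum hrange hh]
  calc (N : ℝ)⁻¹ * h ^ (-(1 : ℝ) / 2) * ∫ w, gauss d h w * corrEnergy Λ σ u ((N : ℝ) • w)
      ≤ (N : ℝ)⁻¹ * h ^ (-(1 : ℝ) / 2) * (N * ∫ w, gauss d h w * corrEnergy Λ σ u w) := by
        gcongr
        exact integral_gauss_mul_corrEnergy_natCast_smul_le hΛ htri hum hrange hsum hper hh hN
    _ = h ^ (-(1 : ℝ) / 2) * ∫ w, gauss d h w * corrEnergy Λ σ u w := by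
        field_simp

/-- Monotonicity of the thresholding energies: for `u : [0,Λ)^d → [0,1]^P`
with `∑ᵢ uᵢ = 1`, a symmetric surface tension matrix `σ` with zero diagonal, positive
off-diagonal entries and satisfying the triangle inequality, one has
`E_{N²h}(u) ≤ E_h(u)` for every `h > 0` and every `N ∈ ℕ`, `N ≥ 1`. -/
theorem stmt10 (d P : ℕ) (Λ : ℝ) (hΛ : 0 < Λ)
    (σ : Matrix (Fin P) (Fin P) ℝ)
    (hsymm : ∀ i j, σ i j = σ j i)
    (hdiag : ∀ i, σ i i = 0)
    (hpos : ∀ i j, i ≠ j → 0 < σ i j)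
    (htri : ∀ i j k, σ i j ≤ σ i k + σ k j)
    (u : EuclideanSpace ℝ (Fin d) → Fin P → ℝ)
    (hum : Measurable u)
    (hrange : ∀ x i, u x i ∈ Set.Icc (0:ℝ) 1)
    (hsum : ∀ x, ∑ i, u x i = 1)
    (hper : ∀ (x : EuclideanSpace ℝ (Fin d)) (i : Fin d),
      u (x + EuclideanSpace.single i Λ) = u x)
    (h : ℝ) (hh : 0 < h) (N : ℕ) (hN : 0 < N) :
    Eh d P Λ σ ((N : ℝ) ^ 2 * h) u ≤ Eh d P Λ σ h u :=
  stmt10_general d P Λ hΛ σ htri u hum hrange hsum hper h hh N hN
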